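/- In the chord-space model, for arbitrary real parameters q, q_m, r and arbitrary μ ∈ ℂ, the complex linear span of the set of vectors { (H̃_{R,i₁} ∘ ⋯ ∘ H̃_{R,i_k})(ω) : k ∈ ℕ, i₁,…,i_k ∈ {0,1} } is all of V. (Algebraic form of Lemma 1: the vacuum ω is a cyclic vector for the EoW-brane boundary algebra generated by H̃_{R,0} and H̃_{R,1}.) -/

import Mathlib

namespace DSSYK

/-- Binary strings (chord words); the letter `0` is `false`, the letter `1` is `true`. -/
abbrev Str : Type := List Bool

/-- The chord space: finitely supported complex functions on binary strings. -/
abbrev Sp : Type := Str →₀ ℂ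

/-- Crossing weights: `Q 0 0 = q`, `Q 1 1 = q_m`, mixed crossings give `r`. -/
def Qmat (q qm r : ℝ) : Bool → Bool → ℂ
  | false, false => (q : ℂ)
  | true,  true  => (qm : ℂ)
  | _,     _     => (r : ℂ)

/-- Right creation `a†_{R,i}`: append the letter `i` on the right. -/
noncomputable def creR (i : Bool) : Sp →ₗ[ℂ] Sp :=
  Finsupp.lift Sp ℂ Str fun w => Finsupp.single (w ++ [i]) 1

/-- Value of the right annihilation operator on a basis string: delete one letter
equal to `i`, weighted by the crossing factors with all letters to its right. -/
noncomputable def annVecR (Q : Bool → Bool → ℂ) (i : Bool) : Str → Sp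
  | [] => 0
  | x :: t =>
      (if x = i then ((t.map (Q i)).prod) • Finsupp.single t (1 : ℂ) else 0)
        + Finsupp.mapDomain (List.cons x) (annVecR Q i t)

/-- Right annihilation `a_{R,i}`. -/
noncomputable def annR (Q : Bool → Bool → ℂ) (i : Bool) : Sp →ₗ[ℂ] Sp :=
  Finsupp.lift Sp ℂ Str (annVecR Q i)

/-- Left creation `a†_{L,i}`: prepend the letter `i`. -/
noncomputable def creL (i : Bool) : Sp →ₗ[ℂ] Sp :=
  Finsupp.lift Sp ℂ Str fun w => Finsupp.single (i :: w) 1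

/-- Value of the left annihilation operator on a basis string: delete one letter
equal to `i`, weighted by the crossing factors with all letters to its left. -/
noncomputable def annVecL (Q : Bool → Bool → ℂ) (i : Bool) : Str → Sp
  | [] => 0
  | x :: t =>
      (if x = i then Finsupp.single t (1 : ℂ) else 0)
        + Q i x • Finsupp.mapDomain (List.cons x) (annVecL Q i t)

/-- Left annihilation `a_{L,i}`. -/
noncomputable def annL (Q : Bool → Bool → ℂ) (i : Bool) : Sp →ₗ[ℂ] Sp :=
  Finsupp.lift Sp ℂ Str (annVecL Q i)

/-- Diagonal weight operator `δ_w ↦ c₀^{N₀(w)} · c₁^{N₁(w)} · δ_w`, where `N₀, N₁`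
count the `0`'s and `1`'s in `w`. -/
noncomputable def Wgen (c₀ c₁ : ℂ) : Sp →ₗ[ℂ] Sp :=
  Finsupp.lift Sp ℂ Str fun w =>
    Finsupp.single w (c₀ ^ (w.count false) * c₁ ^ (w.count true))

/-- The chord-counting weight operator `W δ_w = q^{N₀(w)} r^{N₁(w)} δ_w`. -/
noncomputable def Wop (q r : ℝ) : Sp →ₗ[ℂ] Sp := Wgen (q : ℂ) (r : ℂ)

/-- Right boundary operators `H_{R,i} = a_{R,i} + a†_{R,i}`. -/
noncomputable def HR (Q : Bool → Bool → ℂ) (i : Bool) : Sp →ₗ[ℂ] Sp := annR Q i + creR i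

/-- Left boundary operators `H_{L,i} = a_{L,i} + a†_{L,i}`. -/
noncomputable def HL (Q : Bool → Bool → ℂ) (i : Bool) : Sp →ₗ[ℂ] Sp := annL Q i + creL i

/-- The vacuum `ω = δ_{[]}` (the empty string). -/
noncomputable def vac : Sp := Finsupp.single [] 1

/-- `ε v = v([])`, the coefficient of the empty string. -/
def eps (v : Sp) : ℂ := v []

end DSSYK

namespace DSSYK

/-- The EoW-brane boundary generators: `H̃_{R,0} = H_{R,0} + μW` and `H̃_{R,1} = H_{R,1}`. -/
noncomputable def HRt (q qm r : ℝ) (μ : ℂ) (i : Bool) : Module.End ℂ Sp :=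
  HR (Qmat q qm r) i + if i = false then μ • Wop q r else 0

end DSSYK


/-!
Filter the chord space by word length. Each generator acts on a basis word `w` as
`H̃_{R,i} δ_w = δ_{w·i} + (terms supported on words of length at most |w|)`: the annihilation
part shortens `w` and the brane term `μW` is diagonal. So the operators are "triangular" with
respect to the length filtration, and by induction on the length every `δ_w` lies in the span
of the orbit of the vacuum.
-/

namespace DSSYK

open Finsupp Submodule

theorem span_orbit_single_nil_eq_top {α R : Type*} [Ring R]
    (T : α → Module.End R (List α →₀ R))
    (hT : ∀ i w, T i (single w 1) - single (w ++ [i]) 1 ∈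
      supported R R {u : List α | u.length ≤ w.length}) :
    span R {v | ∃ l : List α, v = (l.map T).prod (single [] 1)} = ⊤ := by
  set P := span R {v | ∃ l : List α, v = (l.map T).prod (single [] 1)}
  have hPT : ∀ i, ∀ v ∈ P, T i v ∈ P := fun i =>
    (span_le (p := P.comap (T i))).mpr fun _ ⟨l, hl⟩ =>
      subset_span ⟨i :: l, by simp [hl, Module.End.mul_apply]⟩
  have hlen : ∀ n, supported R R {u : List α | u.length ≤ n} ≤ P := by
    intro n
    induction n with
    | zero =>
      rw [supported_eq_span_single, span_le]
      rintro _ ⟨u, hu, rfl⟩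
      rw [List.length_eq_zero_iff.mp (Nat.le_zero.mp hu)]
      exact subset_span ⟨[], by simp⟩
    | succ n ih =>
      rw [supported_eq_span_single, span_le]
      rintro _ ⟨u, hu, rfl⟩
      obtain rfl | ⟨w, i, rfl⟩ := u.eq_nil_or_concat'
      · exact ih (single_mem_supported R 1 (Nat.zero_le n))
      · have hw : w.length ≤ n := by simpa using hu
        have hwP : single w 1 ∈ P := ih (single_mem_supported R 1 hw)
        have hlower : T i (single w 1) - single (w ++ [i]) 1 ∈ P :=
          ih (supported_mono (Set.ofPred_subset_ofPred.mpr fun _ hu => hu.trans hw) (hT i w))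
        simpa using sub_mem (hPT i _ hwP) hlower
  rw [eq_top_iff, ← supported_univ, supported_eq_span_single, span_le]
  rintro _ ⟨u, -, rfl⟩
  exact hlen u.length (single_mem_supported R 1 (Set.mem_ofPred.mpr le_rfl))

theorem annVecR_mem_supported (Q : Bool → Bool → ℂ) (i : Bool) (w : Str) :
    annVecR Q i w ∈ supported ℂ ℂ {u : Str | u.length < w.length} := by
  induction w with
  | nil => exact zero_mem _
  | cons x t ih =>
    rw [annVecR]
    refine add_mem ?_ (supported_comap_lmapDomain ℂ ℂ (List.cons x) _ ?_)
    · split_ifs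
      · exact smul_mem _ _ (single_mem_supported ℂ 1 (Nat.lt_succ_self _))
      · exact zero_mem _
    · exact supported_mono (Set.ofPred_subset_ofPred.mpr fun _ hu => by simpa using hu) ih

theorem annR_single (Q : Bool → Bool → ℂ) (i : Bool) (w : Str) :
    annR Q i (single w 1) = annVecR Q i w := by
  simp [annR, lift_apply]

theorem creR_single (i : Bool) (w : Str) : creR i (single w 1) = single (w ++ [i]) 1 := by
  simp [creR, lift_apply]

theorem Wgen_single (c₀ c₁ : ℂ) (w : Str) :
    Wgen c₀ c₁ (single w 1) = single w (c₀ ^ w.count false * c₁ ^ w.count true) := by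
  simp [Wgen, lift_apply]

theorem HRt_single_sub_mem_supported (q qm r : ℝ) (μ : ℂ) (i : Bool) (w : Str) :
    HRt q qm r μ i (single w 1) - single (w ++ [i]) 1 ∈
      supported ℂ ℂ {u : Str | u.length ≤ w.length} := by
  have hann := annVecR_mem_supported (Qmat q qm r) i w
  have hW : (if i = false then μ • Wop q r else 0) (single w 1) ∈
      supported ℂ ℂ {u : Str | u.length ≤ w.length} := by
    split_ifs
    · rw [LinearMap.smul_apply, Wop, Wgen_single]
      exact smul_mem _ _ (single_mem_supported ℂ _ (Set.mem_ofPred.mpr le_rfl))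
    · exact zero_mem _
  have hsplit : HRt q qm r μ i (single w 1) - single (w ++ [i]) 1 =
      annVecR (Qmat q qm r) i w + (if i = false then μ • Wop q r else 0) (single w 1) := by
    simp only [HRt, HR, LinearMap.add_apply, annR_single, creR_single]
    abel
  rw [hsplit]
  exact add_mem (supported_mono (Set.ofPred_subset_ofPred.mpr fun _ hu => hu.le) hann) hW

end DSSYK

open DSSYK in
/-- the vacuum `ω` is cyclic for the EoW-brane boundary algebra:
the span of all vectors `H̃_{R,i₁} ∘ ⋯ ∘ H̃_{R,i_k} ω` is the whole chord space. -/
theorem stmt_9 (q qm r : ℝ) (μ : ℂ) :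
    Submodule.span ℂ
        {v : Sp | ∃ l : List Bool, v = ((l.map (HRt q qm r μ)).prod) vac} = ⊤ :=
  span_orbit_single_nil_eq_top _ (HRt_single_sub_mem_supported q qm r μ)
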